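/- arXiv:1709.03679 — 8 statements merged into one kernel-verified Lean document; each statement's English description precedes it below -/
import Mathlib

section
/- The matrix A A'_m equals C_m C_mᵀ, and consequently A A'_m is symmetric and positive semidefinite. -/
open Matrix

/-- The Euclidean (ℓ²) norm of a vector in `Fin n → ℝ`. -/
noncomputable def euclNorm {n : ℕ} (v : Fin n → ℝ) : ℝ :=
  ‖(EuclideanSpace.equiv (Fin n) ℝ).symm v‖

/-! `A Wₘ = Wₘ₊₁ Hₘ` turns `A A'ₘ = (A Wₘ) (Wₘ₊₁ Hₘ)ᵀ` into `Cₘ Cₘᵀ`, a Gram matrix, hence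
symmetric and positive semidefinite. -/

namespace Matrix

variable {k l n R : Type*} [Fintype k] [Fintype l] [Fintype n]

theorem mul_mul_transpose_eq_of_mul_eq [CommSemiring R] {A : Matrix l l R} {W : Matrix l n R}
    {U : Matrix l k R} {H : Matrix k n R} (h : A * W = U * H) :
    A * (W * Hᵀ * Uᵀ) = U * H * (U * H)ᵀ := by
  rw [transpose_mul, ← Matrix.mul_assoc, ← Matrix.mul_assoc, h, Matrix.mul_assoc]

theorem posSemidef_self_mul_transpose [CommRing R] [PartialOrder R] [StarRing R]
    [StarOrderedRing R] [TrivialStar R] (C : Matrix l n R) : (C * Cᵀ).PosSemidef := by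
  simpa only [conjTranspose_eq_transpose_of_trivial] using posSemidef_self_mul_conjTranspose C

end Matrix

theorem stmt_0_general {N m : ℕ} (A : Matrix (Fin N) (Fin N) ℝ)
    (W1 : Matrix (Fin N) (Fin (m + 1)) ℝ) (H : Matrix (Fin (m + 1)) (Fin m) ℝ)
    (Wm : Matrix (Fin N) (Fin m) ℝ)
    (hArn : A * Wm = W1 * H)
    (A' : Matrix (Fin N) (Fin N) ℝ) (hA' : A' = Wm * Hᵀ * W1ᵀ)
    (C : Matrix (Fin N) (Fin m) ℝ) (hC : C = W1 * H) :
    A * A' = C * Cᵀ ∧ (A * A').IsSymm ∧ (A * A').PosSemidef := by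
  have gram : A * A' = C * Cᵀ := by
    rw [hA', hC]
    exact mul_mul_transpose_eq_of_mul_eq hArn
  have psd : (A * A').PosSemidef := gram ▸ posSemidef_self_mul_transpose C
  exact ⟨gram, isHermitian_iff_isSymm.mp psd.isHermitian, psd⟩

/-- With the Arnoldi-type decomposition `A·Wₘ = Wₘ₊₁·Hₘ`, the matrix
`A·A'ₘ` (with `A'ₘ = Wₘ Hₘᵀ Wₘ₊₁ᵀ`) equals `Cₘ Cₘᵀ` (with `Cₘ = Wₘ₊₁ Hₘ`), and consequently
`A·A'ₘ` is symmetric and positive semidefinite. -/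
theorem stmt_0 {N m : ℕ} (A : Matrix (Fin N) (Fin N) ℝ) (b : Fin N → ℝ) (hb : b ≠ 0)
    (W1 : Matrix (Fin N) (Fin (m + 1)) ℝ) (H : Matrix (Fin (m + 1)) (Fin m) ℝ)
    (Wm : Matrix (Fin N) (Fin m) ℝ)
    (hW1 : W1ᵀ * W1 = 1)
    (hcol : ∀ i, W1 i 0 = b i / euclNorm b)
    (hWm : Wm = W1.submatrix id Fin.castSucc)
    (hArn : A * Wm = W1 * H)
    (A' : Matrix (Fin N) (Fin N) ℝ) (hA' : A' = Wm * Hᵀ * W1ᵀ)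
    (C : Matrix (Fin N) (Fin m) ℝ) (hC : C = W1 * H) :
    A * A' = C * Cᵀ ∧ (A * A').IsSymm ∧ (A * A').PosSemidef :=
  stmt_0_general A W1 H Wm hArn A' hA' C hC
end

section
/- If H_m is upper Hessenberg (its (i,j) entry vanishes whenever i > j+1) and all its subdiagonal entries h_{j+1,j}, j = 1, …, m, are nonzero, then the matrix A'_m = W_m H_mᵀ W_{m+1}ᵀ has rank exactly m. -/
/-!
Since `Wₘ` and `Wₘ₊₁` have orthonormal columns, `Wₘ` is left-cancellable and `Wₘ₊₁ᵀ` is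
right-cancellable for the rank, so `rank A'ₘ = rank Hₘᵀ = rank Hₘ`. Deleting the first row of the
Hessenberg matrix `Hₘ` leaves an upper triangular `m × m` matrix whose diagonal is the
subdiagonal of `Hₘ`, hence invertible; so `Hₘ` has full column rank `m`.
-/

open Matrix

namespace Matrix

section OneSidedInverse

variable {R : Type*} [CommSemiring R] [StrongRankCondition R] {l m n : Type*} [Fintype l]
  [Fintype m]

theorem rank_mul_eq_right_of_mul_eq_one [Fintype n] [DecidableEq m] {L : Matrix m l R} {A : Matrix l m R}
    (hLA : L * A = 1) (B : Matrix m n R) : (A * B).rank = B.rank := by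
  refine le_antisymm (rank_mul_le_right A B) ?_
  calc B.rank = (L * (A * B)).rank := by rw [← Matrix.mul_assoc, hLA, Matrix.one_mul]
    _ ≤ (A * B).rank := rank_mul_le_right _ _

theorem rank_mul_eq_left_of_mul_eq_one [DecidableEq m] {A : Matrix m l R} {C : Matrix l m R}
    (hAC : A * C = 1) (B : Matrix n m R) : (B * A).rank = B.rank := by
  refine le_antisymm (rank_mul_le_left B A) ?_
  calc B.rank = (B * A * C).rank := by rw [Matrix.mul_assoc, hAC, Matrix.mul_one]
    _ ≤ (B * A).rank := rank_mul_le_left _ _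

end OneSidedInverse

theorem transpose_mul_self_submatrix_eq_one {α : Type*} [CommSemiring α] {l m n : Type*}
    [Fintype l] [DecidableEq m] [DecidableEq n] {W : Matrix l m α} (hW : Wᵀ * W = 1)
    {e : n → m} (he : Function.Injective e) :
    (W.submatrix id e)ᵀ * W.submatrix id e = 1 := by
  rw [transpose_submatrix, ← submatrix_mul _ _ e id e Function.bijective_id, hW,
    submatrix_one e he]

theorem rank_eq_of_upperHessenberg {K : Type*} [Field K] {m : ℕ}
    (H : Matrix (Fin (m + 1)) (Fin m) K)
    (hHess : ∀ (i : Fin (m + 1)) (j : Fin m), (j : ℕ) + 1 < (i : ℕ) → H i j = 0)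
    (hsub : ∀ j : Fin m, H j.succ j ≠ 0) : H.rank = m := by
  set T := H.submatrix Fin.succ id
  have hT : T.IsUpperTriangular := fun i j hji => hHess i.succ j (by simpa using hji)
  have hTrank : T.rank = m := by
    rw [← Matrix.mul_one T, rank_mul_eq_right_of_isUpperTriangular T 1 hT hsub, rank_one,
      Fintype.card_fin]
  exact le_antisymm (rank_le_width H) (hTrank.symm.le.trans (rank_submatrix_le H Fin.succ id))

end Matrix

theorem stmt_2_general {N m : ℕ}
    (W1 : Matrix (Fin N) (Fin (m + 1)) ℝ) (H : Matrix (Fin (m + 1)) (Fin m) ℝ)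
    (Wm : Matrix (Fin N) (Fin m) ℝ)
    (hW1 : W1ᵀ * W1 = 1)
    (hWm : Wm = W1.submatrix id Fin.castSucc)
    (hHess : ∀ (i : Fin (m + 1)) (j : Fin m), (j : ℕ) + 1 < (i : ℕ) → H i j = 0)
    (hsub : ∀ j : Fin m, H j.succ j ≠ 0)
    (A' : Matrix (Fin N) (Fin N) ℝ) (hA' : A' = Wm * Hᵀ * W1ᵀ) :
    A'.rank = m := by
  have hWm_orth : Wmᵀ * Wm = 1 :=
    hWm ▸ transpose_mul_self_submatrix_eq_one hW1 (Fin.castSucc_injective m)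
  rw [hA', rank_mul_eq_left_of_mul_eq_one hW1, rank_mul_eq_right_of_mul_eq_one hWm_orth,
    rank_transpose, rank_eq_of_upperHessenberg H hHess hsub]

/-- If `Hₘ` is upper Hessenberg with nonvanishing subdiagonal entries, then
the matrix `A'ₘ = Wₘ Hₘᵀ Wₘ₊₁ᵀ` has rank exactly `m`. -/
theorem stmt_2 {N m : ℕ} (A : Matrix (Fin N) (Fin N) ℝ) (b : Fin N → ℝ) (hb : b ≠ 0)
    (W1 : Matrix (Fin N) (Fin (m + 1)) ℝ) (H : Matrix (Fin (m + 1)) (Fin m) ℝ)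
    (Wm : Matrix (Fin N) (Fin m) ℝ)
    (hW1 : W1ᵀ * W1 = 1)
    (hcol : ∀ i, W1 i 0 = b i / euclNorm b)
    (hWm : Wm = W1.submatrix id Fin.castSucc)
    (hArn : A * Wm = W1 * H)
    (hHess : ∀ (i : Fin (m + 1)) (j : Fin m), (j : ℕ) + 1 < (i : ℕ) → H i j = 0)
    (hsub : ∀ j : Fin m, H j.succ j ≠ 0)
    (A' : Matrix (Fin N) (Fin N) ℝ) (hA' : A' = Wm * Hᵀ * W1ᵀ) :
    A'.rank = m :=
  stmt_2_general W1 H Wm hW1 hWm hHess hsub A' hA'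
end

section
/- If y_m ∈ ℝ^N satisfies C_m C_mᵀ y_m = b, then the vector x_m = W_m s_m, where s_m = H_mᵀ W_{m+1}ᵀ y_m ∈ ℝ^m, satisfies A x_m = b. -/
open Matrix

theorem Matrix.mulVec_mulVec_transpose_of_mul_eq {R n k l : Type*} [CommSemiring R]
    [Fintype n] [Fintype k] [Fintype l] {A : Matrix n n R} {W : Matrix n k R}
    {V : Matrix n l R} {H : Matrix l k R} (h : A * W = V * H) (y : n → R) :
    A *ᵥ (W *ᵥ (Hᵀ *ᵥ (Vᵀ *ᵥ y))) = (V * H * (V * H)ᵀ) *ᵥ y := by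
  simp only [mulVec_mulVec, ← Matrix.mul_assoc, h, transpose_mul]

theorem stmt_3_general {N m : ℕ} (A : Matrix (Fin N) (Fin N) ℝ) (b : Fin N → ℝ)
    (W1 : Matrix (Fin N) (Fin (m + 1)) ℝ) (H : Matrix (Fin (m + 1)) (Fin m) ℝ)
    (Wm : Matrix (Fin N) (Fin m) ℝ)
    (hArn : A * Wm = W1 * H)
    (C : Matrix (Fin N) (Fin m) ℝ) (hC : C = W1 * H)
    (y : Fin N → ℝ) (hy : (C * Cᵀ).mulVec y = b)
    (s : Fin m → ℝ) (hs : s = Hᵀ.mulVec (W1ᵀ.mulVec y))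
    (x : Fin N → ℝ) (hx : x = Wm.mulVec s) :
    A.mulVec x = b := by
  rw [hx, hs, mulVec_mulVec_transpose_of_mul_eq hArn, ← hC, hy]

/-- If `yₘ` satisfies `Cₘ Cₘᵀ yₘ = b`, then `xₘ = Wₘ sₘ`, with
`sₘ = Hₘᵀ Wₘ₊₁ᵀ yₘ`, satisfies `A xₘ = b`. -/
theorem stmt_3 {N m : ℕ} (A : Matrix (Fin N) (Fin N) ℝ) (b : Fin N → ℝ) (hb : b ≠ 0)
    (W1 : Matrix (Fin N) (Fin (m + 1)) ℝ) (H : Matrix (Fin (m + 1)) (Fin m) ℝ)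
    (Wm : Matrix (Fin N) (Fin m) ℝ)
    (hW1 : W1ᵀ * W1 = 1)
    (hcol : ∀ i, W1 i 0 = b i / euclNorm b)
    (hWm : Wm = W1.submatrix id Fin.castSucc)
    (hArn : A * Wm = W1 * H)
    (C : Matrix (Fin N) (Fin m) ℝ) (hC : C = W1 * H)
    (y : Fin N → ℝ) (hy : (C * Cᵀ).mulVec y = b)
    (s : Fin m → ℝ) (hs : s = Hᵀ.mulVec (W1ᵀ.mulVec y))
    (x : Fin N → ℝ) (hx : x = Wm.mulVec s) :
    A.mulVec x = b :=
  stmt_3_general A b W1 H Wm hArn C hC y hy s hs x hx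
end

section
/- If s_m ∈ ℝ^m is such that x_m = W_m s_m satisfies A x_m = b, then the system H_m H_mᵀ t = ‖b‖ e_1 has a solution t_m ∈ ℝ^{m+1}, and for any such solution the vector y_m = W_{m+1} t_m satisfies C_m C_mᵀ y_m = b. -/
open Matrix

/-!
The Arnoldi relation turns `A (Wₘ sₘ) = b` into `Wₘ₊₁ (Hₘ sₘ) = b = ‖b‖ Wₘ₊₁ e₁`, and since
`Wₘ₊₁` has orthonormal columns this gives `Hₘ sₘ = ‖b‖ e₁`. Hence `‖b‖ e₁` lies in the range of
`Hₘ`, which over `ℝ` is the range of `Hₘ Hₘᵀ`. For any solution `tₘ`, orthonormality collapses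
`Cₘ Cₘᵀ Wₘ₊₁ = Wₘ₊₁ Hₘ Hₘᵀ Wₘ₊₁ᵀ Wₘ₊₁` to `Wₘ₊₁ Hₘ Hₘᵀ`, so `Cₘ Cₘᵀ yₘ = ‖b‖ Wₘ₊₁ e₁ = b`.
-/

lemma euclNorm_ne_zero {n : ℕ} {v : Fin n → ℝ} (hv : v ≠ 0) : euclNorm v ≠ 0 := by
  simpa [euclNorm] using hv

namespace Matrix

variable {R : Type*} {l m n : Type*}

lemma range_mulVecLin_mul_transpose_self [Field R] [LinearOrder R] [IsStrictOrderedRing R]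
    [Fintype m] [Fintype n] (A : Matrix m n R) :
    LinearMap.range (A * Aᵀ).mulVecLin = LinearMap.range A.mulVecLin := by
  apply Submodule.eq_of_le_of_finrank_le
  · rintro _ ⟨v, rfl⟩
    exact ⟨Aᵀ *ᵥ v, mulVec_mulVec v A Aᵀ⟩
  · simpa [Matrix.rank] using A.rank_self_mul_transpose.ge

lemma exists_mul_transpose_self_mulVec_eq [Field R] [LinearOrder R] [IsStrictOrderedRing R]
    [Fintype m] [Fintype n] (A : Matrix m n R) (v : n → R) : ∃ t, (A * Aᵀ) *ᵥ t = A *ᵥ v :=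
  (range_mulVecLin_mul_transpose_self A).ge ⟨v, rfl⟩

lemma mulVec_injective_of_mul_eq_one [CommRing R] [Fintype m] [Fintype n] [DecidableEq n]
    {B : Matrix n m R} {W : Matrix m n R} (hBW : B * W = 1) : Function.Injective W.mulVec :=
  Function.LeftInverse.injective (g := B.mulVec) fun v => by
    rw [mulVec_mulVec, hBW, one_mulVec]

lemma eq_smul_mulVec_single_of_forall_eq_div [Field R] [Fintype n] [DecidableEq n]
    {W : Matrix m n R} {b : m → R} {c : R} {j : n} (hc : c ≠ 0) (hcol : ∀ i, W i j = b i / c) :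
    b = c • W *ᵥ Pi.single j 1 := by
  ext i
  rw [Pi.smul_apply, mulVec_single_one, col_apply, hcol i, smul_eq_mul, mul_div_cancel₀ _ hc]

lemma mul_mul_transpose_mul_of_transpose_mul_self [CommRing R] [Fintype m] [Fintype n]
    [DecidableEq n] [Fintype l] {W : Matrix m n R} (hW : Wᵀ * W = 1) (H : Matrix n l R) :
    W * H * (W * H)ᵀ * W = W * (H * Hᵀ) := by
  rw [transpose_mul, Matrix.mul_assoc (W * H), Matrix.mul_assoc Hᵀ, hW, Matrix.mul_one,
    Matrix.mul_assoc]

end Matrix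

theorem stmt_5_general {N m : ℕ} (A : Matrix (Fin N) (Fin N) ℝ) (b : Fin N → ℝ) (hb : b ≠ 0)
    (W1 : Matrix (Fin N) (Fin (m + 1)) ℝ) (H : Matrix (Fin (m + 1)) (Fin m) ℝ)
    (Wm : Matrix (Fin N) (Fin m) ℝ)
    (hW1 : W1ᵀ * W1 = 1)
    (hcol : ∀ i, W1 i 0 = b i / euclNorm b)
    (hArn : A * Wm = W1 * H)
    (C : Matrix (Fin N) (Fin m) ℝ) (hC : C = W1 * H)
    (s : Fin m → ℝ) (x : Fin N → ℝ) (hx : x = Wm.mulVec s)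
    (hAx : A.mulVec x = b) :
    (∃ t : Fin (m + 1) → ℝ,
        (H * Hᵀ).mulVec t = euclNorm b • (Pi.single 0 1 : Fin (m + 1) → ℝ)) ∧
    ∀ t : Fin (m + 1) → ℝ,
      (H * Hᵀ).mulVec t = euclNorm b • (Pi.single 0 1 : Fin (m + 1) → ℝ) →
      (C * Cᵀ).mulVec (W1.mulVec t) = b := by
  have hbe : b = euclNorm b • W1 *ᵥ Pi.single 0 1 :=
    eq_smul_mulVec_single_of_forall_eq_div (euclNorm_ne_zero hb) hcol
  have hHs : H *ᵥ s = euclNorm b • Pi.single 0 1 := by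
    apply mulVec_injective_of_mul_eq_one hW1
    rw [mulVec_smul, ← hbe, mulVec_mulVec, ← hArn, ← mulVec_mulVec, ← hx, hAx]
  refine ⟨hHs ▸ H.exists_mul_transpose_self_mulVec_eq s, fun t ht => ?_⟩
  rw [hC, mulVec_mulVec, mul_mul_transpose_mul_of_transpose_mul_self hW1, ← mulVec_mulVec, ht,
    mulVec_smul, ← hbe]

/-- If `xₘ = Wₘ sₘ` satisfies `A xₘ = b`, then the system
`Hₘ Hₘᵀ t = ‖b‖ e₁` has a solution, and for any such solution `tₘ` the vector
`yₘ = Wₘ₊₁ tₘ` satisfies `Cₘ Cₘᵀ yₘ = b`. -/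
theorem stmt_5 {N m : ℕ} (A : Matrix (Fin N) (Fin N) ℝ) (b : Fin N → ℝ) (hb : b ≠ 0)
    (W1 : Matrix (Fin N) (Fin (m + 1)) ℝ) (H : Matrix (Fin (m + 1)) (Fin m) ℝ)
    (Wm : Matrix (Fin N) (Fin m) ℝ)
    (hW1 : W1ᵀ * W1 = 1)
    (hcol : ∀ i, W1 i 0 = b i / euclNorm b)
    (hWm : Wm = W1.submatrix id Fin.castSucc)
    (hArn : A * Wm = W1 * H)
    (C : Matrix (Fin N) (Fin m) ℝ) (hC : C = W1 * H)
    (s : Fin m → ℝ) (x : Fin N → ℝ) (hx : x = Wm.mulVec s)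
    (hAx : A.mulVec x = b) :
    (∃ t : Fin (m + 1) → ℝ,
        (H * Hᵀ).mulVec t = euclNorm b • (Pi.single 0 1 : Fin (m + 1) → ℝ)) ∧
    ∀ t : Fin (m + 1) → ℝ,
      (H * Hᵀ).mulVec t = euclNorm b • (Pi.single 0 1 : Fin (m + 1) → ℝ) →
      (C * Cᵀ).mulVec (W1.mulVec t) = b :=
  stmt_5_general A b hb W1 H Wm hW1 hcol hArn C hC s x hx hAx
end

section
/- Suppose t_m ∈ ℝ^{m+1} is a minimal-norm solution of H_m H_mᵀ t = ‖b‖ e_1 (i.e., H_m H_mᵀ t_m = ‖b‖ e_1 and ‖t_m‖ ≤ ‖t‖ for every t with H_m H_mᵀ t = ‖b‖ e_1). Then y_m = W_{m+1} t_m is a minimal-norm solution of C_m C_mᵀ y = b: C_m C_mᵀ y_m = b, and ‖y_m‖ ≤ ‖y‖ for every y ∈ ℝ^N with C_m C_mᵀ y = b. -/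
open Matrix

lemma euclNorm_eq_sqrt_dotProduct {n : ℕ} (v : Fin n → ℝ) :
    euclNorm v = Real.sqrt (v ⬝ᵥ v) := by
  simp only [euclNorm, EuclideanSpace.norm_eq]
  congr 1
  refine Finset.sum_congr rfl fun i _ => ?_
  simp [sq]

lemma euclNorm_le_euclNorm_iff {n k : ℕ} (u : Fin n → ℝ) (v : Fin k → ℝ) :
    euclNorm u ≤ euclNorm v ↔ u ⬝ᵥ u ≤ v ⬝ᵥ v := by
  rw [euclNorm_eq_sqrt_dotProduct, euclNorm_eq_sqrt_dotProduct,
    Real.sqrt_le_sqrt_iff (by simpa using dotProduct_star_self_nonneg v)]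

section Isometry

variable {n k : Type*} [Fintype n] [Fintype k] [DecidableEq k] {W : Matrix n k ℝ}

lemma transpose_mulVec_mulVec_of_transpose_mul_self (hW : Wᵀ * W = 1) (v : k → ℝ) :
    Wᵀ *ᵥ (W *ᵥ v) = v := by
  rw [mulVec_mulVec, hW, one_mulVec]

lemma dotProduct_mulVec_mulVec_of_transpose_mul_self (hW : Wᵀ * W = 1) (u v : k → ℝ) :
    W *ᵥ u ⬝ᵥ W *ᵥ v = u ⬝ᵥ v := by
  rw [dotProduct_mulVec, ← mulVec_transpose, transpose_mulVec_mulVec_of_transpose_mul_self hW]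

lemma dotProduct_transpose_mulVec_le_of_transpose_mul_self (hW : Wᵀ * W = 1) (y : n → ℝ) :
    Wᵀ *ᵥ y ⬝ᵥ Wᵀ *ᵥ y ≤ y ⬝ᵥ y := by
  set t := Wᵀ *ᵥ y
  have hcross : y ⬝ᵥ W *ᵥ t = t ⬝ᵥ t := by
    rw [dotProduct_mulVec, ← mulVec_transpose]
  -- `y - W t` is orthogonal to the range of `W`, so `y ⬝ᵥ y = t ⬝ᵥ t + ‖y - W t‖²`.
  have hpythagoras : (y - W *ᵥ t) ⬝ᵥ (y - W *ᵥ t) = y ⬝ᵥ y - t ⬝ᵥ t := by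
    rw [dotProduct_sub, sub_dotProduct, sub_dotProduct,
      dotProduct_mulVec_mulVec_of_transpose_mul_self hW, dotProduct_comm (W *ᵥ t), hcross]
    ring
  have hnonneg := dotProduct_star_self_nonneg (y - W *ᵥ t)
  rw [star_trivial, hpythagoras] at hnonneg
  linarith

end Isometry

def IsMinNormSolution {n k : ℕ} (M : Matrix (Fin n) (Fin k) ℝ) (c : Fin n → ℝ)
    (x : Fin k → ℝ) : Prop :=
  M *ᵥ x = c ∧ ∀ x' : Fin k → ℝ, M *ᵥ x' = c → euclNorm x ≤ euclNorm x'

theorem IsMinNormSolution.conj_of_transpose_mul_self {n k : ℕ} {W : Matrix (Fin n) (Fin k) ℝ}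
    (hW : Wᵀ * W = 1) {M : Matrix (Fin k) (Fin k) ℝ} {c t : Fin k → ℝ}
    (ht : IsMinNormSolution M c t) :
    IsMinNormSolution (W * M * Wᵀ) (W *ᵥ c) (W *ᵥ t) := by
  obtain ⟨hsol, hmin⟩ := ht
  have hcomm : Wᵀ * (W * M * Wᵀ) = M * Wᵀ := by
    rw [← Matrix.mul_assoc, ← Matrix.mul_assoc, hW, Matrix.one_mul]
  refine ⟨?_, fun y hy => ?_⟩
  · rw [mulVec_mulVec, Matrix.mul_assoc, hW, Matrix.mul_one, ← mulVec_mulVec, hsol]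
  · have hproj : M *ᵥ (Wᵀ *ᵥ y) = c := by
      rw [mulVec_mulVec, ← hcomm, ← mulVec_mulVec, hy,
        transpose_mulVec_mulVec_of_transpose_mul_self hW]
    calc euclNorm (W *ᵥ t) = euclNorm t := by
          rw [euclNorm_eq_sqrt_dotProduct, euclNorm_eq_sqrt_dotProduct,
            dotProduct_mulVec_mulVec_of_transpose_mul_self hW]
      _ ≤ euclNorm (Wᵀ *ᵥ y) := hmin _ hproj
      _ ≤ euclNorm y := (euclNorm_le_euclNorm_iff _ _).mpr
          (dotProduct_transpose_mulVec_le_of_transpose_mul_self hW y)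

lemma mulVec_smul_single_zero_eq {N m : ℕ} {W : Matrix (Fin N) (Fin (m + 1)) ℝ}
    {b : Fin N → ℝ} (hb : b ≠ 0) (hcol : ∀ i, W i 0 = b i / euclNorm b) :
    W *ᵥ (euclNorm b • Pi.single 0 1) = b := by
  ext i
  rw [mulVec_smul, mulVec_single_one, Pi.smul_apply, col_apply, hcol, smul_eq_mul,
    mul_div_cancel₀ _ (euclNorm_ne_zero hb)]

theorem stmt_6_general {N m : ℕ} (b : Fin N → ℝ) (hb : b ≠ 0)
    (W1 : Matrix (Fin N) (Fin (m + 1)) ℝ) (H : Matrix (Fin (m + 1)) (Fin m) ℝ)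
    (hW1 : W1ᵀ * W1 = 1)
    (hcol : ∀ i, W1 i 0 = b i / euclNorm b)
    (C : Matrix (Fin N) (Fin m) ℝ) (hC : C = W1 * H)
    (t : Fin (m + 1) → ℝ)
    (ht : (H * Hᵀ).mulVec t = euclNorm b • (Pi.single 0 1 : Fin (m + 1) → ℝ))
    (htmin : ∀ t' : Fin (m + 1) → ℝ,
      (H * Hᵀ).mulVec t' = euclNorm b • (Pi.single 0 1 : Fin (m + 1) → ℝ) →
      euclNorm t ≤ euclNorm t')
    (y : Fin N → ℝ) (hy : y = W1.mulVec t) :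
    (C * Cᵀ).mulVec y = b ∧
    ∀ y' : Fin N → ℝ, (C * Cᵀ).mulVec y' = b → euclNorm y ≤ euclNorm y' := by
  have hCC : C * Cᵀ = W1 * (H * Hᵀ) * W1ᵀ := by
    rw [hC, transpose_mul, Matrix.mul_assoc, Matrix.mul_assoc, Matrix.mul_assoc]
  have key := IsMinNormSolution.conj_of_transpose_mul_self hW1 ⟨ht, htmin⟩
  rwa [← hCC, ← hy, mulVec_smul_single_zero_eq hb hcol] at key

/-- If `tₘ` is a minimal-norm solution of `Hₘ Hₘᵀ t = ‖b‖ e₁`, then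
`yₘ = Wₘ₊₁ tₘ` is a minimal-norm solution of `Cₘ Cₘᵀ y = b`. -/
theorem stmt_6 {N m : ℕ} (A : Matrix (Fin N) (Fin N) ℝ) (b : Fin N → ℝ) (hb : b ≠ 0)
    (W1 : Matrix (Fin N) (Fin (m + 1)) ℝ) (H : Matrix (Fin (m + 1)) (Fin m) ℝ)
    (Wm : Matrix (Fin N) (Fin m) ℝ)
    (hW1 : W1ᵀ * W1 = 1)
    (hcol : ∀ i, W1 i 0 = b i / euclNorm b)
    (hWm : Wm = W1.submatrix id Fin.castSucc)
    (hArn : A * Wm = W1 * H)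
    (C : Matrix (Fin N) (Fin m) ℝ) (hC : C = W1 * H)
    (t : Fin (m + 1) → ℝ)
    (ht : (H * Hᵀ).mulVec t = euclNorm b • (Pi.single 0 1 : Fin (m + 1) → ℝ))
    (htmin : ∀ t' : Fin (m + 1) → ℝ,
      (H * Hᵀ).mulVec t' = euclNorm b • (Pi.single 0 1 : Fin (m + 1) → ℝ) →
      euclNorm t ≤ euclNorm t')
    (y : Fin N → ℝ) (hy : y = W1.mulVec t) :
    (C * Cᵀ).mulVec y = b ∧
    ∀ y' : Fin N → ℝ, (C * Cᵀ).mulVec y' = b → euclNorm y ≤ euclNorm y' :=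
  stmt_6_general b hb W1 H hW1 hcol C hC t ht htmin y hy
end

section
/- (Transpose-free CGLS characterization.) Let k ≤ m and suppose y ∈ ℝ^N satisfies the MINRES conditions for the system C_m C_mᵀ y = b: y ∈ K_k(C_m C_mᵀ, b), and ⟨b − C_m C_mᵀ y, C_m C_mᵀ v⟩ = 0 for all v ∈ K_k(C_m C_mᵀ, b). Then x = A'_m y satisfies: x ∈ K_k(P_m Aᵀ A, P_m Aᵀ b), and ⟨b − A x, A w⟩ = 0 for all w ∈ K_k(P_m Aᵀ A, P_m Aᵀ b). -/
/-!
Since `A Wₘ = Wₘ₊₁ Hₘ`, we have `Pₘ Aᵀ = Wₘ (A Wₘ)ᵀ = A'ₘ` and `A A'ₘ = Cₘ Cₘᵀ`. Hence `A'ₘ`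
intertwines `Cₘ Cₘᵀ = A A'ₘ` with `Pₘ Aᵀ A = A'ₘ A`, so it maps `K_k(Cₘ Cₘᵀ, b)` onto
`K_k(Pₘ Aᵀ A, Pₘ Aᵀ b)`. Writing `x = A'ₘ y` and `w = A'ₘ v`, the CGLS conditions
`⟨b − A x, A w⟩ = 0` become the MINRES conditions `⟨b − Cₘ Cₘᵀ y, Cₘ Cₘᵀ v⟩ = 0`.
-/

open Matrix

/-- The Krylov subspace `K_k(C, d) = span {d, C d, …, C^{k-1} d}`. -/
def Krylov {n : ℕ} (C : Matrix (Fin n) (Fin n) ℝ) (d : Fin n → ℝ) (k : ℕ) :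
    Submodule ℝ (Fin n → ℝ) :=
  Submodule.span ℝ {v : Fin n → ℝ | ∃ j < k, v = (C ^ j).mulVec d}

lemma Matrix.pow_mul_eq_mul_pow_of_mul_eq {ι κ R : Type*} [Fintype ι] [DecidableEq ι]
    [Fintype κ] [DecidableEq κ] [Semiring R] {M : Matrix ι ι R} {B : Matrix ι κ R}
    {L : Matrix κ κ R} (hB : M * B = B * L) (j : ℕ) :
    M ^ j * B = B * L ^ j := by
  induction j with
  | zero => simp
  | succ j ih =>
    rw [pow_succ, Matrix.mul_assoc, hB, ← Matrix.mul_assoc, ih, Matrix.mul_assoc, ← pow_succ]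

lemma Krylov_eq_map_of_mul_eq {n p : ℕ} {M : Matrix (Fin n) (Fin n) ℝ}
    {B : Matrix (Fin n) (Fin p) ℝ} {L : Matrix (Fin p) (Fin p) ℝ} (hB : M * B = B * L) (d : Fin p → ℝ) (k : ℕ) :
    Krylov M (B *ᵥ d) k = (Krylov L d k).map B.mulVecLin := by
  have hpow (j : ℕ) : (M ^ j) *ᵥ (B *ᵥ d) = B.mulVecLin ((L ^ j) *ᵥ d) := by
    rw [mulVecLin_apply, mulVec_mulVec, mulVec_mulVec, pow_mul_eq_mul_pow_of_mul_eq hB]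
  rw [Krylov, Krylov, Submodule.map_span]
  congr 1
  ext v
  constructor
  · rintro ⟨j, hj, rfl⟩
    exact ⟨_, ⟨j, hj, rfl⟩, (hpow j).symm⟩
  · rintro ⟨_, ⟨j, hj, rfl⟩, rfl⟩
    exact ⟨j, hj, (hpow j).symm⟩

theorem stmt_12_general {N m : ℕ} (A : Matrix (Fin N) (Fin N) ℝ) (b : Fin N → ℝ)
    (W1 : Matrix (Fin N) (Fin (m + 1)) ℝ) (H : Matrix (Fin (m + 1)) (Fin m) ℝ)
    (Wm : Matrix (Fin N) (Fin m) ℝ)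
    (hArn : A * Wm = W1 * H)
    (A' : Matrix (Fin N) (Fin N) ℝ) (hA' : A' = Wm * Hᵀ * W1ᵀ)
    (C : Matrix (Fin N) (Fin m) ℝ) (hC : C = W1 * H)
    (P : Matrix (Fin N) (Fin N) ℝ) (hP : P = Wm * Wmᵀ)
    (k : ℕ)
    (y : Fin N → ℝ)
    (hyK : y ∈ Krylov (C * Cᵀ) b k)
    (hyO : ∀ v ∈ Krylov (C * Cᵀ) b k,
      (b - (C * Cᵀ).mulVec y) ⬝ᵥ ((C * Cᵀ).mulVec v) = 0)
    (x : Fin N → ℝ) (hx : x = A'.mulVec y) :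
    x ∈ Krylov (P * Aᵀ * A) ((P * Aᵀ).mulVec b) k ∧
    ∀ w ∈ Krylov (P * Aᵀ * A) ((P * Aᵀ).mulVec b) k,
      (b - A.mulVec x) ⬝ᵥ (A.mulVec w) = 0 := by
  have hPA : P * Aᵀ = A' := by
    rw [hP, hA', Matrix.mul_assoc, ← transpose_mul, hArn, transpose_mul, ← Matrix.mul_assoc]
  have hAA' : A * A' = C * Cᵀ := by
    rw [hA', hC, transpose_mul, ← Matrix.mul_assoc, ← Matrix.mul_assoc, hArn, Matrix.mul_assoc]
  have hKrylov :
      Krylov (P * Aᵀ * A) ((P * Aᵀ) *ᵥ b) k = (Krylov (C * Cᵀ) b k).map A'.mulVecLin := by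
    rw [hPA]
    exact Krylov_eq_map_of_mul_eq (by rw [Matrix.mul_assoc, hAA']) b k
  rw [hKrylov, hx]
  refine ⟨⟨y, hyK, rfl⟩, ?_⟩
  rintro _ ⟨v, hv, rfl⟩
  rw [mulVecLin_apply, mulVec_mulVec, mulVec_mulVec, hAA']
  exact hyO v hv

/-- transpose-free CGLS characterization. If `y` satisfies the MINRES
conditions for `Cₘ Cₘᵀ y = b` on `K_k(Cₘ Cₘᵀ, b)`, then `x = A'ₘ y` lies in
`K_k(Pₘ Aᵀ A, Pₘ Aᵀ b)` and `b − A x ⊥ A · K_k(Pₘ Aᵀ A, Pₘ Aᵀ b)`. -/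
theorem stmt_12 {N m : ℕ} (A : Matrix (Fin N) (Fin N) ℝ) (b : Fin N → ℝ) (hb : b ≠ 0)
    (W1 : Matrix (Fin N) (Fin (m + 1)) ℝ) (H : Matrix (Fin (m + 1)) (Fin m) ℝ)
    (Wm : Matrix (Fin N) (Fin m) ℝ)
    (hW1 : W1ᵀ * W1 = 1)
    (hcol : ∀ i, W1 i 0 = b i / euclNorm b)
    (hWm : Wm = W1.submatrix id Fin.castSucc)
    (hArn : A * Wm = W1 * H)
    (A' : Matrix (Fin N) (Fin N) ℝ) (hA' : A' = Wm * Hᵀ * W1ᵀ)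
    (C : Matrix (Fin N) (Fin m) ℝ) (hC : C = W1 * H)
    (P : Matrix (Fin N) (Fin N) ℝ) (hP : P = Wm * Wmᵀ)
    (k : ℕ) (hk : k ≤ m)
    (y : Fin N → ℝ)
    (hyK : y ∈ Krylov (C * Cᵀ) b k)
    (hyO : ∀ v ∈ Krylov (C * Cᵀ) b k,
      (b - (C * Cᵀ).mulVec y) ⬝ᵥ ((C * Cᵀ).mulVec v) = 0)
    (x : Fin N → ℝ) (hx : x = A'.mulVec y) :
    x ∈ Krylov (P * Aᵀ * A) ((P * Aᵀ).mulVec b) k ∧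
    ∀ w ∈ Krylov (P * Aᵀ * A) ((P * Aᵀ).mulVec b) k,
      (b - A.mulVec x) ⬝ᵥ (A.mulVec w) = 0 :=
  stmt_12_general A b W1 H Wm hArn A' hA' C hC P hP k y hyK hyO x hx
end

section
/- (Transpose-free CGNE characterization.) Let k ≤ m and suppose y ∈ ℝ^N satisfies the CG conditions for the system C_m C_mᵀ y = b: y ∈ K_k(C_m C_mᵀ, b), and ⟨b − C_m C_mᵀ y, v⟩ = 0 for all v ∈ K_k(C_m C_mᵀ, b). Then x = A'_m y satisfies: x lies in the image of K_k(A P_m Aᵀ, b) under the map u ↦ P_m Aᵀ u, and for every x̂ ∈ ℝ^N with A x̂ = b one has ⟨x̂ − x, Aᵀ v⟩ = 0 for all v ∈ K_k(A P_m Aᵀ, b). -/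
open Matrix

/-!
Both halves reduce to two identities that follow from the Arnoldi relation `A Wₘ = Wₘ₊₁ Hₘ`:
`Cₘ Cₘᵀ = A Pₘ Aᵀ` and `A'ₘ = Pₘ Aᵀ`. The first makes the two Krylov subspaces equal,
so `x = Pₘ Aᵀ y` lies in the required image; with the second, `A (x̂ - x) = b - Cₘ Cₘᵀ y` is the
CG residual, and moving `Aᵀ` across the inner product turns the Galerkin condition for `y` into
the orthogonality of `x̂ - x` to `Aᵀ · K_k(A Pₘ Aᵀ, b)`.
-/

section Arnoldi

variable {R n p q : Type*} [CommRing R] [Fintype n] [Fintype p] [Fintype q]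
  {A : Matrix n n R} {W : Matrix n q R} {Wm : Matrix n p R} {H : Matrix q p R}

theorem arnoldi_mul_mul_transpose (hArn : A * Wm = W * H) :
    W * H * (W * H)ᵀ = A * (Wm * Wmᵀ) * Aᵀ := by
  rw [← hArn, transpose_mul, Matrix.mul_assoc, Matrix.mul_assoc, Matrix.mul_assoc]

theorem arnoldi_mul_transpose_mul (hArn : A * Wm = W * H) :
    Wm * Hᵀ * Wᵀ = Wm * Wmᵀ * Aᵀ := by
  rw [Matrix.mul_assoc, ← transpose_mul, ← hArn, transpose_mul, Matrix.mul_assoc]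

end Arnoldi

theorem sub_dotProduct_transpose_mulVec {R n : Type*} [CommRing R] [Fintype n]
    {A : Matrix n n R} {xhat b : n → R} (hxhat : A *ᵥ xhat = b) (x v : n → R) :
    (xhat - x) ⬝ᵥ (Aᵀ *ᵥ v) = (b - A *ᵥ x) ⬝ᵥ v := by
  rw [dotProduct_mulVec, vecMul_transpose, mulVec_sub, hxhat]

theorem stmt_13_general {N m : ℕ} (A : Matrix (Fin N) (Fin N) ℝ) (b : Fin N → ℝ)
    (W1 : Matrix (Fin N) (Fin (m + 1)) ℝ) (H : Matrix (Fin (m + 1)) (Fin m) ℝ)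
    (Wm : Matrix (Fin N) (Fin m) ℝ)
    (hArn : A * Wm = W1 * H)
    (A' : Matrix (Fin N) (Fin N) ℝ) (hA' : A' = Wm * Hᵀ * W1ᵀ)
    (C : Matrix (Fin N) (Fin m) ℝ) (hC : C = W1 * H)
    (P : Matrix (Fin N) (Fin N) ℝ) (hP : P = Wm * Wmᵀ)
    (k : ℕ)
    (y : Fin N → ℝ)
    (hyK : y ∈ Krylov (C * Cᵀ) b k)
    (hyO : ∀ v ∈ Krylov (C * Cᵀ) b k, (b - (C * Cᵀ).mulVec y) ⬝ᵥ v = 0)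
    (x : Fin N → ℝ) (hx : x = A'.mulVec y) :
    x ∈ Submodule.map (Matrix.mulVecLin (P * Aᵀ)) (Krylov (A * P * Aᵀ) b k) ∧
    ∀ xhat : Fin N → ℝ, A.mulVec xhat = b →
      ∀ v ∈ Krylov (A * P * Aᵀ) b k, (xhat - x) ⬝ᵥ (Aᵀ.mulVec v) = 0 := by
  have hCC : C * Cᵀ = A * P * Aᵀ := by rw [hC, hP, arnoldi_mul_mul_transpose hArn]
  have hx' : x = (P * Aᵀ) *ᵥ y := by rw [hx, hA', hP, arnoldi_mul_transpose_mul hArn]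
  rw [hCC] at hyK hyO
  refine ⟨⟨y, hyK, hx'.symm⟩, fun xhat hxhat v hv => ?_⟩
  rw [sub_dotProduct_transpose_mulVec hxhat, hx', mulVec_mulVec, ← Matrix.mul_assoc]
  exact hyO v hv

/-- transpose-free CGNE characterization. If `y` satisfies the CG
conditions for `Cₘ Cₘᵀ y = b` on `K_k(Cₘ Cₘᵀ, b)`, then `x = A'ₘ y` lies in
`Pₘ Aᵀ · K_k(A Pₘ Aᵀ, b)`, and for every `x̂` with `A x̂ = b` one has
`x̂ − x ⊥ Aᵀ · K_k(A Pₘ Aᵀ, b)`. -/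
theorem stmt_13 {N m : ℕ} (A : Matrix (Fin N) (Fin N) ℝ) (b : Fin N → ℝ) (hb : b ≠ 0)
    (W1 : Matrix (Fin N) (Fin (m + 1)) ℝ) (H : Matrix (Fin (m + 1)) (Fin m) ℝ)
    (Wm : Matrix (Fin N) (Fin m) ℝ)
    (hW1 : W1ᵀ * W1 = 1)
    (hcol : ∀ i, W1 i 0 = b i / euclNorm b)
    (hWm : Wm = W1.submatrix id Fin.castSucc)
    (hArn : A * Wm = W1 * H)
    (A' : Matrix (Fin N) (Fin N) ℝ) (hA' : A' = Wm * Hᵀ * W1ᵀ)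
    (C : Matrix (Fin N) (Fin m) ℝ) (hC : C = W1 * H)
    (P : Matrix (Fin N) (Fin N) ℝ) (hP : P = Wm * Wmᵀ)
    (k : ℕ) (hk : k ≤ m)
    (y : Fin N → ℝ)
    (hyK : y ∈ Krylov (C * Cᵀ) b k)
    (hyO : ∀ v ∈ Krylov (C * Cᵀ) b k, (b - (C * Cᵀ).mulVec y) ⬝ᵥ v = 0)
    (x : Fin N → ℝ) (hx : x = A'.mulVec y) :
    x ∈ Submodule.map (Matrix.mulVecLin (P * Aᵀ)) (Krylov (A * P * Aᵀ) b k) ∧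
    ∀ xhat : Fin N → ℝ, A.mulVec xhat = b →
      ∀ v ∈ Krylov (A * P * Aᵀ) b k, (xhat - x) ⬝ᵥ (Aᵀ.mulVec v) = 0 :=
  stmt_13_general A b W1 H Wm hArn A' hA' C hC P hP k y hyK hyO x hx
end

section
/- (Hybrid interpretation of TF-CGLS.) Let k ≥ 1 and suppose y ∈ K_k(C_m C_mᵀ, b). Then x = A'_m y can be written as x = W_m t for some t ∈ K_k(H_mᵀ H_m, ‖b‖ H_mᵀ e_1), where e_1 is the first canonical basis vector of ℝ^{m+1}. -/
open Matrix

/-!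
Since `Cₘ = Wₘ₊₁ Hₘ`, we have `A'ₘ = Wₘ Cₘᵀ`, so `x = Wₘ t` with `t = Cₘᵀ y`. The matrix `Cₘᵀ`
intertwines `Cₘ Cₘᵀ` with `Cₘᵀ Cₘ = Hₘᵀ Hₘ` (orthonormality of `Wₘ₊₁`), hence maps
`K_k(Cₘ Cₘᵀ, b)` into `K_k(Hₘᵀ Hₘ, Cₘᵀ b)`, and `Cₘᵀ b = ‖b‖ Hₘᵀ e₁` because `b = ‖b‖ Wₘ₊₁ e₁`.
-/

theorem euclNorm_eq_zero {n : ℕ} {v : Fin n → ℝ} : euclNorm v = 0 ↔ v = 0 := by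
  simp [euclNorm]

theorem eq_euclNorm_smul_mulVec_single {N : ℕ} {ι : Type*} [Fintype ι] [DecidableEq ι]
    {b : Fin N → ℝ} {W : Matrix (Fin N) ι ℝ} {j : ι} (hcol : ∀ i, W i j = b i / euclNorm b) :
    b = euclNorm b • W *ᵥ Pi.single j 1 := by
  ext i
  rw [Pi.smul_apply, mulVec_single_one, col_apply, hcol, smul_eq_mul, mul_comm,
    div_mul_cancel_of_imp fun h ↦ by rw [euclNorm_eq_zero.mp h, Pi.zero_apply]]

theorem Matrix.mul_pow_eq_pow_mul_of_mul_eq {m n R : Type*} [Fintype m] [Fintype n]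
    [DecidableEq m] [DecidableEq n] [Semiring R] {P : Matrix m n R} {X : Matrix n n R}
    {Y : Matrix m m R} (h : P * X = Y * P) (j : ℕ) : P * X ^ j = Y ^ j * P := by
  induction j with
  | zero => simp
  | succ j ih => rw [pow_succ, ← Matrix.mul_assoc, ih, Matrix.mul_assoc, h, ← Matrix.mul_assoc,
      ← pow_succ]

theorem Krylov.mulVec_mem {n p : ℕ} {P : Matrix (Fin p) (Fin n) ℝ} {X : Matrix (Fin n) (Fin n) ℝ}
    {Y : Matrix (Fin p) (Fin p) ℝ} (h : P * X = Y * P) {d y : Fin n → ℝ} {k : ℕ}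
    (hy : y ∈ Krylov X d k) : P *ᵥ y ∈ Krylov Y (P *ᵥ d) k := by
  have hgen : Submodule.map P.mulVecLin (Krylov X d k) ≤ Krylov Y (P *ᵥ d) k := by
    rw [Krylov, Submodule.map_span_le]
    rintro _ ⟨j, hj, rfl⟩
    refine Submodule.subset_span ⟨j, hj, ?_⟩
    rw [mulVecLin_apply, mulVec_mulVec, mul_pow_eq_pow_mul_of_mul_eq h, ← mulVec_mulVec]
  exact hgen (Submodule.mem_map_of_mem hy)

theorem stmt_17_general {N m : ℕ} (b : Fin N → ℝ)
    (W1 : Matrix (Fin N) (Fin (m + 1)) ℝ) (H : Matrix (Fin (m + 1)) (Fin m) ℝ)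
    (Wm : Matrix (Fin N) (Fin m) ℝ)
    (hW1 : W1ᵀ * W1 = 1)
    (hcol : ∀ i, W1 i 0 = b i / euclNorm b)
    (A' : Matrix (Fin N) (Fin N) ℝ) (hA' : A' = Wm * Hᵀ * W1ᵀ)
    (C : Matrix (Fin N) (Fin m) ℝ) (hC : C = W1 * H)
    (k : ℕ)
    (y : Fin N → ℝ) (hy : y ∈ Krylov (C * Cᵀ) b k)
    (x : Fin N → ℝ) (hx : x = A'.mulVec y) :
    ∃ t : Fin m → ℝ,
      t ∈ Krylov (Hᵀ * H) (euclNorm b • Hᵀ.mulVec (Pi.single 0 1 : Fin (m + 1) → ℝ)) k ∧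
      x = Wm.mulVec t := by
  have hCC : Cᵀ * C = Hᵀ * H := by
    rw [hC, transpose_mul, Matrix.mul_assoc, ← Matrix.mul_assoc W1ᵀ, hW1, Matrix.one_mul]
  have hCb : Cᵀ *ᵥ b = euclNorm b • Hᵀ *ᵥ Pi.single 0 1 := by
    conv_lhs => rw [eq_euclNorm_smul_mulVec_single hcol]
    rw [hC, transpose_mul, mulVec_smul, mulVec_mulVec, Matrix.mul_assoc, hW1, Matrix.mul_one]
  refine ⟨Cᵀ *ᵥ y, ?_, ?_⟩
  · rw [← hCC, ← hCb]
    exact Krylov.mulVec_mem (Matrix.mul_assoc _ _ _).symm hy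
  · rw [hx, hA', hC, transpose_mul, Matrix.mul_assoc, mulVec_mulVec]

/-- hybrid interpretation of TF-CGLS. If `y ∈ K_k(Cₘ Cₘᵀ, b)`, then
`x = A'ₘ y` can be written as `x = Wₘ t` with `t ∈ K_k(Hₘᵀ Hₘ, ‖b‖ Hₘᵀ e₁)`. -/
theorem stmt_17 {N m : ℕ} (A : Matrix (Fin N) (Fin N) ℝ) (b : Fin N → ℝ) (hb : b ≠ 0)
    (W1 : Matrix (Fin N) (Fin (m + 1)) ℝ) (H : Matrix (Fin (m + 1)) (Fin m) ℝ)
    (Wm : Matrix (Fin N) (Fin m) ℝ)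
    (hW1 : W1ᵀ * W1 = 1)
    (hcol : ∀ i, W1 i 0 = b i / euclNorm b)
    (hWm : Wm = W1.submatrix id Fin.castSucc)
    (hArn : A * Wm = W1 * H)
    (A' : Matrix (Fin N) (Fin N) ℝ) (hA' : A' = Wm * Hᵀ * W1ᵀ)
    (C : Matrix (Fin N) (Fin m) ℝ) (hC : C = W1 * H)
    (k : ℕ) (hk : 1 ≤ k)
    (y : Fin N → ℝ) (hy : y ∈ Krylov (C * Cᵀ) b k)
    (x : Fin N → ℝ) (hx : x = A'.mulVec y) :
    ∃ t : Fin m → ℝ,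
      t ∈ Krylov (Hᵀ * H) (euclNorm b • Hᵀ.mulVec (Pi.single 0 1 : Fin (m + 1) → ℝ)) k ∧
      x = Wm.mulVec t :=
  stmt_17_general b W1 H Wm hW1 hcol A' hA' C hC k y hy x hx
end
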